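/- Let {u_1, …, u_{m−1}} be an orthonormal basis of D2. Then for all v1, v2, v3, v4 ∈ D2: K(L(v1,v2), L(v3,v4)) = μ·⟨L(v1,v2),L(v3,v4)⟩·e1 + μη·⟨v1,v2⟩·L(v3,v4) + Σ_{i=1}^{m−1} ⟨L(v1,u_i),L(v3,v4)⟩·L(u_i,v2) + Σ_{i=1}^{m−1} ⟨L(v2,u_i),L(v3,v4)⟩·L(u_i,v1). -/

import Mathlib

/-!
Write `μ = λ₁/2 − η`, so that `ε = λ₁²/4 − η²`. For `v ∈ D₂` the operator `R(v, e₁)` acts by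
`R(v,e₁)y = −η L(v,y) + η²⟨v,y⟩e₁` on `D₂` and by `R(v,e₁)w = η K(v,w)` on `D₃`. Feeding this
into the parallelism identity for `R(v₁,e₁) K(v₂,w)` with `w ∈ D₃` and dividing by `η ≠ 0` gives
`K(L(v₁,v₂), w) = μ⟨L(v₁,v₂),w⟩e₁ + μη⟨v₁,v₂⟩w + L(v₂, K(v₁,w)) + L(v₁, K(v₂,w))`.
Since `K(v,w) ∈ D₂` has coordinates `⟨uᵢ, K(v,w)⟩ = ⟨L(v,uᵢ), w⟩`, expanding it in the basis `u`
and taking `w = L(v₃,v₄)` yields the formula. The computation of `R(v,e₁)` uses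
`K(e₁,e₁) = λ₁e₁`, which holds because `K(e₁,e₁)` is orthogonal to `D₂ ⊕ D₃`.
-/

open scoped RealInnerProductSpace
open Module Submodule

noncomputable section

variable {V : Type*} [NormedAddCommGroup V] [InnerProductSpace ℝ V]

/-- The curvature-type operator built from `ε` and the difference tensor `K`:
`R(X,Y)Z = ε(⟨Y,Z⟩X − ⟨X,Z⟩Y) − K(X,K(Y,Z)) + K(Y,K(X,Z))`. -/
def Rc (ε : ℝ) (K : V →ₗ[ℝ] V →ₗ[ℝ] V) (X Y Z : V) : V :=
  ε • (⟪Y, Z⟫ • X - ⟪X, Z⟫ • Y) - K X (K Y Z) + K Y (K X Z)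

/-- The bilinear map `L(v₁,v₂) = K(v₁,v₂) − (λ₁/2)⟨v₁,v₂⟩ e₁`. -/
def Lop (lam1 : ℝ) (e1 : V) (K : V →ₗ[ℝ] V →ₗ[ℝ] V) (v1 v2 : V) : V :=
  K v1 v2 - (lam1 / 2 * ⟪v1, v2⟫) • e1

/-- The distribution `D₂ = {v : v ⟂ e₁, K(e₁,v) = (λ₁/2)v}`. -/
def D2s (lam1 : ℝ) (e1 : V) (K : V →ₗ[ℝ] V →ₗ[ℝ] V) : Submodule ℝ V :=
  (ℝ ∙ e1)ᗮ ⊓ Module.End.eigenspace (K e1) (lam1 / 2)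

/-- The distribution `D₃ = {w : w ⟂ e₁, K(e₁,w) = μw}`. -/
def D3s (mu : ℝ) (e1 : V) (K : V →ₗ[ℝ] V →ₗ[ℝ] V) : Submodule ℝ V :=
  (ℝ ∙ e1)ᗮ ⊓ Module.End.eigenspace (K e1) mu

/-- The operator `P_v(ṽ) = K(v, L(v,ṽ))`, as a linear endomorphism of `V`. -/
def Pop (lam1 : ℝ) (e1 : V) (K : V →ₗ[ℝ] V →ₗ[ℝ] V) (v : V) : V →ₗ[ℝ] V :=
  (K v) ∘ₗ (K v - (lam1 / 2) •
    ((LinearMap.toSpanSingleton ℝ V e1) ∘ₗ (innerSL ℝ v).toLinearMap))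

/-- The eigenspace `V_v(c)` of `P_v` within the orthogonal complement of `v` in `D₂`. -/
def Vvs (lam1 c : ℝ) (e1 : V) (K : V →ₗ[ℝ] V →ₗ[ℝ] V) (v : V) : Submodule ℝ V :=
  D2s lam1 e1 K ⊓ (ℝ ∙ v)ᗮ ⊓ Module.End.eigenspace (Pop lam1 e1 K v) c

theorem Orthonormal.sum_inner_smul_eq_of_mem_span {ι : Type*} [Fintype ι] {u : ι → V}
    (hu : Orthonormal ℝ u) {p : V} (hp : p ∈ span ℝ (Set.range u)) :
    ∑ i, ⟪u i, p⟫ • u i = p := by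
  obtain ⟨c, rfl⟩ := (mem_span_range_iff_exists_fun ℝ).1 hp
  simp only [hu.inner_right_fintype]

section CubicForm

variable {K : V →ₗ[ℝ] V →ₗ[ℝ] V} {e1 : V} {lam1 μ : ℝ}

theorem mem_D3s_iff {w : V} : w ∈ D3s μ e1 K ↔ ⟪e1, w⟫ = 0 ∧ K e1 w = μ • w := by
  rw [D3s, mem_inf, mem_orthogonal_singleton_iff_inner_right, Module.End.mem_eigenspace_iff]

-- `D2s lam1 e1 K` is `D3s (lam1 / 2) e1 K` by definition, so lemmas about `D3s` apply to `D₂` too.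
theorem mem_D2s_iff {v : V} : v ∈ D2s lam1 e1 K ↔ ⟪e1, v⟫ = 0 ∧ K e1 v = (lam1 / 2) • v :=
  mem_D3s_iff

theorem K_eq_Lop_add (lam1 : ℝ) (e1 x y : V) : K x y = Lop lam1 e1 K x y + (lam1 / 2 * ⟪x, y⟫) • e1 :=
  (sub_add_cancel _ _).symm

theorem Lop_comm (hKsymm : ∀ X Y : V, K X Y = K Y X) (x y : V) :
    Lop lam1 e1 K x y = Lop lam1 e1 K y x := by
  rw [Lop, Lop, hKsymm x y, real_inner_comm x y]

theorem Lop_sum_smul {ι : Type*} [Fintype ι] (x : V) (c : ι → ℝ) (u : ι → V) :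
    Lop lam1 e1 K x (∑ i, c i • u i) = ∑ i, c i • Lop lam1 e1 K x (u i) := by
  simp only [Lop, map_sum, map_smul, inner_sum, real_inner_smul_right, Finset.mul_sum,
    Finset.sum_smul, smul_sub, smul_smul, ← Finset.sum_sub_distrib, mul_left_comm]

theorem isSymmetric_of_cubic (hKcub : ∀ X Y Z : V, ⟪K X Y, Z⟫ = ⟪K X Z, Y⟫) (X : V) :
    (K X).IsSymmetric := fun Y Z => by rw [hKcub, real_inner_comm]

theorem inner_K_eq_inner_Lop (hKsymm : ∀ X Y : V, K X Y = K Y X)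
    (hKcub : ∀ X Y Z : V, ⟪K X Y, Z⟫ = ⟪K X Z, Y⟫) (lam1 : ℝ) {w : V} (hw : ⟪e1, w⟫ = 0)
    (x y : V) : ⟪x, K y w⟫ = ⟪Lop lam1 e1 K x y, w⟫ := by
  rw [real_inner_comm, hKcub, hKsymm, K_eq_Lop_add lam1 e1, inner_add_left,
    real_inner_smul_left, hw, mul_zero, add_zero]

theorem inner_eq_zero_of_mem_D2s_of_mem_D3s (hKcub : ∀ X Y Z : V, ⟪K X Y, Z⟫ = ⟪K X Z, Y⟫)
    (hne : lam1 / 2 ≠ μ) {v w : V} (hv : v ∈ D2s lam1 e1 K) (hw : w ∈ D3s μ e1 K) :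
    ⟪v, w⟫ = 0 :=
  (isSymmetric_of_cubic hKcub e1).orthogonalFamily_eigenspaces hne ⟨v, hv.2⟩ ⟨w, hw.2⟩

theorem K_self_sub_smul_mem_orthogonal_D3s (hKcub : ∀ X Y Z : V, ⟪K X Y, Z⟫ = ⟪K X Z, Y⟫)
    (c : ℝ) : K e1 e1 - c • e1 ∈ (D3s μ e1 K)ᗮ := by
  intro w hw
  obtain ⟨hwe, hKw⟩ := mem_D3s_iff.1 hw
  rw [inner_sub_right, ← isSymmetric_of_cubic hKcub, hKw, real_inner_smul_left,
    real_inner_smul_right, real_inner_comm, hwe]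
  ring

theorem K_self_eq_smul_of_sup_eq_top (hKcub : ∀ X Y Z : V, ⟪K X Y, Z⟫ = ⟪K X Z, Y⟫)
    (he1 : ‖e1‖ = 1) (hlam1 : lam1 = ⟪K e1 e1, e1⟫)
    (hsplit : (ℝ ∙ e1) ⊔ D2s lam1 e1 K ⊔ D3s μ e1 K = ⊤) : K e1 e1 = lam1 • e1 := by
  have he1K : ⟪e1, K e1 e1 - lam1 • e1⟫ = 0 := by
    rw [inner_sub_right, real_inner_smul_right, real_inner_self_eq_norm_sq, he1,
      real_inner_comm, ← hlam1]
    ring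
  have hperp : K e1 e1 - lam1 • e1 ∈ ((ℝ ∙ e1) ⊔ D2s lam1 e1 K ⊔ D3s μ e1 K)ᗮ := by
    simp only [← inf_orthogonal, mem_inf, mem_orthogonal_singleton_iff_inner_right]
    exact ⟨⟨he1K, K_self_sub_smul_mem_orthogonal_D3s hKcub _⟩,
      K_self_sub_smul_mem_orthogonal_D3s hKcub _⟩
  rwa [hsplit, top_orthogonal_eq_bot, mem_bot, sub_eq_zero] at hperp

theorem Lop_K_eq_sum {ι : Type*} [Fintype ι] (hKsymm : ∀ X Y : V, K X Y = K Y X)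
    (hKcub : ∀ X Y Z : V, ⟪K X Y, Z⟫ = ⟪K X Z, Y⟫) {u : ι → V} (hu : Orthonormal ℝ u)
    {x y w : V} (hwe : ⟪e1, w⟫ = 0) (hyw : K y w ∈ span ℝ (Set.range u)) :
    Lop lam1 e1 K x (K y w) = ∑ i, ⟪Lop lam1 e1 K y (u i), w⟫ • Lop lam1 e1 K (u i) x := by
  conv_lhs => rw [← hu.sum_inner_smul_eq_of_mem_span hyw, Lop_sum_smul]
  refine Finset.sum_congr rfl fun i _ => ?_
  rw [inner_K_eq_inner_Lop hKsymm hKcub lam1 hwe, Lop_comm hKsymm x, Lop_comm hKsymm (u i) y]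

variable {ε η : ℝ}

theorem Rc_e1_of_mem_D2s (hε : ε = lam1 ^ 2 / 4 - η ^ 2) (hμ : μ = lam1 / 2 - η)
    (hKe1 : K e1 e1 = lam1 • e1) {x y : V} (hy : y ∈ D2s lam1 e1 K)
    (hL : Lop lam1 e1 K x y ∈ D3s μ e1 K) :
    Rc ε K x e1 y = (-η) • Lop lam1 e1 K x y + (η ^ 2 * ⟪x, y⟫) • e1 := by
  obtain ⟨hye, hKy⟩ := mem_D2s_iff.1 hy
  subst hε hμ
  rw [Rc, hye, hKy, map_smul, K_eq_Lop_add lam1 e1 x y, map_add, map_smul,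
    hKe1, (mem_D3s_iff.1 hL).2]
  module

theorem Rc_e1_of_mem_D3s (hμ : μ = lam1 / 2 - η) {x w : V} (hxw : ⟪x, w⟫ = 0)
    (hw : w ∈ D3s μ e1 K) (hK : K x w ∈ D2s lam1 e1 K) :
    Rc ε K x e1 w = η • K x w := by
  obtain ⟨hwe, hKw⟩ := mem_D3s_iff.1 hw
  subst hμ
  rw [Rc, hwe, hxw, hKw, map_smul, (mem_D2s_iff.1 hK).2]
  module

theorem K_Lop_of_mem_D3s (hKsymm : ∀ X Y : V, K X Y = K Y X)
    (hKcub : ∀ X Y Z : V, ⟪K X Y, Z⟫ = ⟪K X Z, Y⟫)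
    (hpar : ∀ X Y Z U : V, Rc ε K X Y (K Z U) = K (Rc ε K X Y Z) U + K Z (Rc ε K X Y U))
    (hε : ε = lam1 ^ 2 / 4 - η ^ 2) (hμ : μ = lam1 / 2 - η) (hη : η ≠ 0)
    (hKe1 : K e1 e1 = lam1 • e1)
    (hLD3 : ∀ v1 ∈ D2s lam1 e1 K, ∀ v2 ∈ D2s lam1 e1 K, Lop lam1 e1 K v1 v2 ∈ D3s μ e1 K)
    (hKD2 : ∀ v ∈ D2s lam1 e1 K, ∀ w ∈ D3s μ e1 K, K v w ∈ D2s lam1 e1 K)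
    {v1 v2 w : V} (hv1 : v1 ∈ D2s lam1 e1 K) (hv2 : v2 ∈ D2s lam1 e1 K) (hw : w ∈ D3s μ e1 K) :
    K (Lop lam1 e1 K v1 v2) w =
      (μ * ⟪Lop lam1 e1 K v1 v2, w⟫) • e1 + (μ * η * ⟪v1, v2⟫) • w +
        Lop lam1 e1 K v2 (K v1 w) + Lop lam1 e1 K v1 (K v2 w) := by
  have hne : lam1 / 2 ≠ μ := by rw [hμ]; intro h; exact hη (by linarith)
  have hwe := (mem_D3s_iff.1 hw).1
  have E := hpar v1 e1 v2 w
  rw [Rc_e1_of_mem_D2s hε hμ hKe1 (hKD2 v2 hv2 w hw) (hLD3 v1 hv1 _ (hKD2 v2 hv2 w hw)),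
    Rc_e1_of_mem_D2s hε hμ hKe1 hv2 (hLD3 v1 hv1 v2 hv2),
    Rc_e1_of_mem_D3s hμ (inner_eq_zero_of_mem_D2s_of_mem_D3s hKcub hne hv1 hw) hw
      (hKD2 v1 hv1 w hw)] at E
  simp only [map_add, map_smul, LinearMap.add_apply, LinearMap.smul_apply] at E
  rw [(mem_D3s_iff.1 hw).2, inner_K_eq_inner_Lop hKsymm hKcub lam1 hwe v1 v2,
    K_eq_Lop_add lam1 e1 v2 (K v1 w),
    inner_K_eq_inner_Lop hKsymm hKcub lam1 hwe v2 v1, Lop_comm hKsymm v2 v1] at E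
  subst hμ
  refine smul_right_injective V hη ?_
  linear_combination (norm := module) E

end CubicForm

theorem stmt_8_general {V : Type*} [NormedAddCommGroup V] [InnerProductSpace ℝ V]
    (m : ℕ)
    (ε : ℝ)
    (K : V →ₗ[ℝ] V →ₗ[ℝ] V)
    (hKsymm : ∀ X Y : V, K X Y = K Y X)
    (hKcub : ∀ X Y Z : V, ⟪K X Y, Z⟫ = ⟪K X Z, Y⟫)
    (hpar : ∀ X Y Z U : V,
      Rc ε K X Y (K Z U) = K (Rc ε K X Y Z) U + K Z (Rc ε K X Y U))
    (e1 : V) (he1 : ‖e1‖ = 1)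
    (lam1 η μ : ℝ)
    (hlam1 : lam1 = ⟪K e1 e1, e1⟫)
    (hdisc : 0 < lam1 ^ 2 - 4 * ε)
    (hη : η = Real.sqrt (lam1 ^ 2 - 4 * ε) / 2)
    (hμ : μ = (lam1 - Real.sqrt (lam1 ^ 2 - 4 * ε)) / 2)
    (hsplit : (ℝ ∙ e1) ⊔ D2s lam1 e1 K ⊔ D3s μ e1 K = ⊤)
    (hLD3 : ∀ v1 ∈ D2s lam1 e1 K, ∀ v2 ∈ D2s lam1 e1 K,
      Lop lam1 e1 K v1 v2 ∈ D3s μ e1 K)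
    (hKD2 : ∀ v ∈ D2s lam1 e1 K, ∀ w ∈ D3s μ e1 K, K v w ∈ D2s lam1 e1 K)
    (u : Fin (m - 1) → V)
    (huON : Orthonormal ℝ u)
    (huspan : Submodule.span ℝ (Set.range u) = D2s lam1 e1 K) :
    ∀ v1 ∈ D2s lam1 e1 K, ∀ v2 ∈ D2s lam1 e1 K, ∀ v3 ∈ D2s lam1 e1 K,
      ∀ v4 ∈ D2s lam1 e1 K,
        K (Lop lam1 e1 K v1 v2) (Lop lam1 e1 K v3 v4) =
          (μ * ⟪Lop lam1 e1 K v1 v2, Lop lam1 e1 K v3 v4⟫) • e1 +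
            (μ * η * ⟪v1, v2⟫) • Lop lam1 e1 K v3 v4 +
            ∑ i, ⟪Lop lam1 e1 K v1 (u i), Lop lam1 e1 K v3 v4⟫ •
              Lop lam1 e1 K (u i) v2 +
            ∑ i, ⟪Lop lam1 e1 K v2 (u i), Lop lam1 e1 K v3 v4⟫ •
              Lop lam1 e1 K (u i) v1 := by
  have hη0 : η ≠ 0 := by rw [hη]; exact (div_pos (Real.sqrt_pos.2 hdisc) two_pos).ne'
  have hε : ε = lam1 ^ 2 / 4 - η ^ 2 := by rw [hη]; linear_combination Real.sq_sqrt hdisc.le / 4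
  have hμη : μ = lam1 / 2 - η := by rw [hμ, hη]; ring
  have hKe1 := K_self_eq_smul_of_sup_eq_top hKcub he1 hlam1 hsplit
  intro v1 hv1 v2 hv2 v3 hv3 v4 hv4
  have hw := hLD3 v3 hv3 v4 hv4
  have hwe := (mem_D3s_iff.1 hw).1
  rw [K_Lop_of_mem_D3s hKsymm hKcub hpar hε hμη hη0 hKe1 hLD3 hKD2 hv1 hv2 hw,
    Lop_K_eq_sum hKsymm hKcub huON hwe (huspan ▸ hKD2 v1 hv1 _ hw),
    Lop_K_eq_sum hKsymm hKcub huON hwe (huspan ▸ hKD2 v2 hv2 _ hw)]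

/-- Lemma 4.6: the formula for `K(L(v₁,v₂), L(v₃,v₄))` in terms of an orthonormal
basis `{u₁, …, u_{m-1}}` of `D₂`. -/
theorem stmt_8 {V : Type*} [NormedAddCommGroup V] [InnerProductSpace ℝ V]
    (n m : ℕ) (hn : finrank ℝ V = n) (hn2 : 2 ≤ n)
    (ε : ℝ) (hε : ε = 1 ∨ ε = -1)
    (K : V →ₗ[ℝ] V →ₗ[ℝ] V)
    (hKsymm : ∀ X Y : V, K X Y = K Y X)
    (hKcub : ∀ X Y Z : V, ⟪K X Y, Z⟫ = ⟪K X Z, Y⟫)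
    (hpar : ∀ X Y Z U : V,
      Rc ε K X Y (K Z U) = K (Rc ε K X Y Z) U + K Z (Rc ε K X Y U))
    (e1 : V) (he1 : ‖e1‖ = 1)
    (lam1 η μ τ : ℝ)
    (hlam1 : lam1 = ⟪K e1 e1, e1⟫) (hlam1pos : 0 < lam1)
    (hmax : ∀ u : V, ‖u‖ = 1 → ⟪K u u, u⟫ ≤ lam1)
    (hdisc : 0 < lam1 ^ 2 - 4 * ε)
    (hη : η = Real.sqrt (lam1 ^ 2 - 4 * ε) / 2)
    (hμ : μ = (lam1 - Real.sqrt (lam1 ^ 2 - 4 * ε)) / 2)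
    (hτ : τ = η * (η + lam1 / 2) / 4)
    (hm2 : 2 ≤ m) (hmn : m ≤ n - 1)
    (hdimD2 : finrank ℝ (D2s lam1 e1 K) = m - 1)
    (hsplit : (ℝ ∙ e1) ⊔ D2s lam1 e1 K ⊔ D3s μ e1 K = ⊤)
    (hLD3 : ∀ v1 ∈ D2s lam1 e1 K, ∀ v2 ∈ D2s lam1 e1 K,
      Lop lam1 e1 K v1 v2 ∈ D3s μ e1 K)
    (hKD2 : ∀ v ∈ D2s lam1 e1 K, ∀ w ∈ D3s μ e1 K, K v w ∈ D2s lam1 e1 K)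
    (u : Fin (m - 1) → V) (huD2 : ∀ i, u i ∈ D2s lam1 e1 K)
    (huON : Orthonormal ℝ u)
    (huspan : Submodule.span ℝ (Set.range u) = D2s lam1 e1 K) :
    ∀ v1 ∈ D2s lam1 e1 K, ∀ v2 ∈ D2s lam1 e1 K, ∀ v3 ∈ D2s lam1 e1 K,
      ∀ v4 ∈ D2s lam1 e1 K,
        K (Lop lam1 e1 K v1 v2) (Lop lam1 e1 K v3 v4) =
          (μ * ⟪Lop lam1 e1 K v1 v2, Lop lam1 e1 K v3 v4⟫) • e1 +
            (μ * η * ⟪v1, v2⟫) • Lop lam1 e1 K v3 v4 +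
            ∑ i, ⟪Lop lam1 e1 K v1 (u i), Lop lam1 e1 K v3 v4⟫ •
              Lop lam1 e1 K (u i) v2 +
            ∑ i, ⟪Lop lam1 e1 K v2 (u i), Lop lam1 e1 K v3 v4⟫ •
              Lop lam1 e1 K (u i) v1 :=
  stmt_8_general m ε K hKsymm hKcub hpar e1 he1 lam1 η μ hlam1 hdisc hη hμ hsplit hLD3 hKD2 u huON
    huspan

end
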